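/- Let Γ be a finite simple graph, let A and B be adjacent vertices of Γ, and let l ≥ 4. Then the number of l-cycles of Γ passing through the edge AB such that the neighbor C of A along the cycle (C ≠ B) is adjacent to B in Γ and the neighbor D of B along the cycle (D ≠ A) is adjacent to A in Γ, is even. -/

import Mathlib

open Finset
open scoped Classical

/-- The cyclic successor of an element of `Fin m`. -/
def cyclicSucc {m : ℕ} (a : Fin m) : Fin m :=
  ⟨((a : ℕ) + 1) % m, Nat.mod_lt _ a.pos⟩

/-- The cyclic predecessor of an element of `Fin m`. -/
def cyclicPred {m : ℕ} (a : Fin m) : Fin m :=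
  ⟨((a : ℕ) + (m - 1)) % m, Nat.mod_lt _ a.pos⟩

/-- `f : Fin l → V` traces an `l`-cycle of `G`: it is injective and cyclically
consecutive vertices are adjacent. -/
def IsCycleMap {V : Type} (G : SimpleGraph V) (l : ℕ) (f : Fin l → V) : Prop :=
  Function.Injective f ∧ ∀ i : Fin l, G.Adj (f i) (f (cyclicSucc i))

/-- The number `E_l(G)` of `l`-cycles of `G`, counted up to rotation and reflection
(each such cycle is traced by exactly `2 * l` maps `Fin l → V`). -/
noncomputable def cycleCount {V : Type} [Fintype V] (G : SimpleGraph V) (l : ℕ) : ℕ :=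
  (Finset.univ.filter (fun f : Fin l → V => IsCycleMap G l f)).card / (2 * l)

/-- `o` is an orientation of `G`: every edge gets exactly one direction. -/
def IsOrientation {V : Type} (G : SimpleGraph V) (o : V → V → Prop) : Prop :=
  ∀ ⦃x y : V⦄, G.Adj x y → (o x y ↔ ¬ o y x)

/-- The sign of a cycle map with respect to a direction relation `o`:
`+1` iff the number of edges agreeing with the traversal is even. -/
noncomputable def cycleSign {V : Type} {l : ℕ} (o : V → V → Prop) (f : Fin l → V) : ℤ :=
  (-1) ^ (Finset.univ.filter (fun i : Fin l => o (f i) (f (cyclicSucc i)))).card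

/-- The sum of signs of all `l`-cycles of `G` (counted up to rotation and
reflection) with respect to the direction relation `o`. -/
noncomputable def signedCycleSum {V : Type} [Fintype V] (G : SimpleGraph V)
    (o : V → V → Prop) (l : ℕ) : ℤ :=
  (∑ f ∈ Finset.univ.filter (fun f : Fin l → V => IsCycleMap G l f),
    cycleSign o f) / (2 * (l : ℤ))

/-- The graph `Γ'_AB`: toggle the adjacency between the vertices `A` and `B`. -/
def toggleEdge {V : Type} (G : SimpleGraph V) (A B : V) : SimpleGraph V where
  Adj x y := x ≠ y ∧ (G.Adj x y ↔ ¬((x = A ∧ y = B) ∨ (x = B ∧ y = A)))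
  symm := by
    constructor
    intro x y h
    obtain ⟨h1, h2⟩ := h
    refine ⟨h1.symm, ?_⟩
    rw [G.adj_comm]
    tauto
  loopless := ⟨fun x h => h.1 rfl⟩

/-- The graph `Γ̃_AB`: toggle the adjacency between `A` and every vertex
`C ∉ {A, B}` adjacent to `B` in `Γ`. -/
def tildeGraph {V : Type} (G : SimpleGraph V) (A B : V) : SimpleGraph V where
  Adj x y := x ≠ y ∧
    (G.Adj x y ↔ ¬((x = A ∧ y ≠ B ∧ G.Adj y B) ∨ (y = A ∧ x ≠ B ∧ G.Adj x B)))
  symm := by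
    constructor
    intro x y h
    obtain ⟨h1, h2⟩ := h
    refine ⟨h1.symm, ?_⟩
    rw [G.adj_comm]
    tauto
  loopless := ⟨fun x h => h.1 rfl⟩

/-- A chord diagram of order `n`: a partition of the `2 * n` cyclically ordered
points `0, 1, …, 2n - 1` into `n` two-element blocks (chords), here recorded by
the function assigning to each point its chord. -/
structure ChordDiagram (n : ℕ) where
  chord : Fin (2 * n) → Fin n
  fiber_two : ∀ i : Fin n, (Finset.univ.filter (fun x => chord x = i)).card = 2

namespace ChordDiagram

variable {n : ℕ}

/-- The pair of endpoints of the chord `i`. -/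
def endpoints (d : ChordDiagram n) (i : Fin n) : Finset (Fin (2 * n)) :=
  Finset.univ.filter (fun x => d.chord x = i)

lemma endpoints_nonempty (d : ChordDiagram n) (i : Fin n) : (d.endpoints i).Nonempty := by
  rw [← Finset.card_pos, endpoints, d.fiber_two]
  norm_num

/-- The smaller endpoint of the chord `i`. -/
def lo (d : ChordDiagram n) (i : Fin n) : Fin (2 * n) :=
  (d.endpoints i).min' (d.endpoints_nonempty i)

/-- The larger endpoint of the chord `i`. -/
def hi (d : ChordDiagram n) (i : Fin n) : Fin (2 * n) :=
  (d.endpoints i).max' (d.endpoints_nonempty i)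

/-- Chords `i` and `j` cross: exactly one endpoint of `j` lies strictly between
the two endpoints of `i`. -/
def Crosses (d : ChordDiagram n) (i j : Fin n) : Prop :=
  Xor' (d.lo i < d.lo j ∧ d.lo j < d.hi i) (d.lo i < d.hi j ∧ d.hi j < d.hi i)

/-- The intersection graph `γ(d)` of the chord diagram `d`. -/
def interGraph (d : ChordDiagram n) : SimpleGraph (Fin n) where
  Adj i j := i ≠ j ∧ (d.Crosses i j ∨ d.Crosses j i)
  symm := ⟨fun i j h => ⟨h.1.symm, h.2.symm⟩⟩
  loopless := ⟨fun i h => h.1 rfl⟩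

lemma chord_lo (d : ChordDiagram n) (i : Fin n) : d.chord (d.lo i) = i := by
  have h := (d.endpoints i).min'_mem (d.endpoints_nonempty i)
  exact (Finset.mem_filter.mp h).2

/-- An orientation of a chord diagram: a choice of a beginning point for each
chord (the other endpoint being its end). -/
def Orientation (d : ChordDiagram n) : Type :=
  { b : Fin n → Fin (2 * n) // ∀ i, d.chord (b i) = i }

/-- The end of the chord `i`, i.e. its endpoint other than the beginning. -/
def endOf (d : ChordDiagram n) (o : d.Orientation) (i : Fin n) : Fin (2 * n) :=
  if o.1 i = d.lo i then d.hi i else d.lo i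

/-- The point `z` lies on the arc going in the positive direction from `a` to `b`. -/
def InArc {m : ℕ} (a b z : Fin m) : Prop :=
  if a < b then a < z ∧ z < b else a < z ∨ z < b

/-- The direction induced by an orientation of the chords on the edges of the
intersection graph: the edge between `i` and `j` is directed from `i` to `j`
iff the beginning of `j` lies on the arc going in the positive direction from
the beginning of `i` to the end of `i`. -/
def dir (d : ChordDiagram n) (o : d.Orientation) (i j : Fin n) : Prop :=
  InArc (o.1 i) (d.endOf o i) (o.1 j)

/-- The canonical orientation: every chord begins at its smaller endpoint. -/
def canonical (d : ChordDiagram n) : d.Orientation :=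
  ⟨d.lo, d.chord_lo⟩

end ChordDiagram

/-- The weight system `R_k`: the sum of the signs of the `2k`-cycles of the
directed intersection graph (for the canonical orientation of the chords). -/
noncomputable def Rk (k : ℕ) {n : ℕ} (d : ChordDiagram n) : ℤ :=
  signedCycleSum d.interGraph (d.dir d.canonical) (2 * k)

/-- When the point at position `p` is moved to position `q` (keeping the relative
order of all the other points), `moveFun p q r` is the old position of the point
occupying the position `r` after the move. -/
def moveFun {m : ℕ} (p q : Fin m) (r : Fin m) : Fin m :=
  if r = q then p
  else if h : (p : ℕ) ≤ (r : ℕ) ∧ (r : ℕ) < (q : ℕ) then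
    ⟨(r : ℕ) + 1, by have := q.isLt; omega⟩
  else if h' : (q : ℕ) < (r : ℕ) ∧ (r : ℕ) ≤ (p : ℕ) then
    ⟨(r : ℕ) - 1, by have := r.isLt; omega⟩
  else r

/-- The invariant `w_C`: `1` if the adjacency matrix of the graph over `ZMod 2`
is nondegenerate, `0` otherwise. -/
noncomputable def wC {V : Type} [Fintype V] (G : SimpleGraph V) : ℤ :=
  if (G.adjMatrix (ZMod 2)).det ≠ 0 then 1 else 0

/-- All set partitions of `Fin n` into nonempty blocks. -/
noncomputable def finPartitions (n : ℕ) : Finset (Finset (Finset (Fin n))) :=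
  Finset.univ.filter (fun P =>
    (∀ s ∈ P, s.Nonempty) ∧ ∀ x : Fin n, ∃! s, s ∈ P ∧ x ∈ s)

/-- A `4`-invariant of finite simple graphs: an integer-valued, isomorphism
invariant function satisfying the `4`-term relation for graphs. -/
structure FourInvariant where
  val : ∀ n : ℕ, SimpleGraph (Fin n) → ℤ
  iso_invariant : ∀ {n m : ℕ} (G : SimpleGraph (Fin n)) (H : SimpleGraph (Fin m)),
    Nonempty (G ≃g H) → val n G = val m H
  four_term : ∀ (n : ℕ) (G : SimpleGraph (Fin n)) (A B : Fin n), A ≠ B →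
    val n G - val n (toggleEdge G A B) =
      val n (tildeGraph G A B) - val n (toggleEdge (tildeGraph G A B) A B)

/-- The `5`-wheel: a `5`-cycle on the vertices `0, …, 4` together with the hub `5`
adjacent to all five cycle vertices. -/
def wheel5 : SimpleGraph (Fin 6) :=
  SimpleGraph.fromRel (fun x y =>
    ((x : ℕ) = 5 ∧ (y : ℕ) < 5) ∨
    ((x : ℕ) < 5 ∧ (y : ℕ) < 5 ∧ (y : ℕ) = ((x : ℕ) + 1) % 5))

/-- The triangular prism: two triangles `{0, 1, 2}` and `{3, 4, 5}` joined by the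
perfect matching `i — i + 3`. -/
def prism : SimpleGraph (Fin 6) :=
  SimpleGraph.fromRel (fun x y =>
    ((x : ℕ) < 3 ∧ (y : ℕ) < 3 ∧ x ≠ y) ∨
    (3 ≤ (x : ℕ) ∧ 3 ≤ (y : ℕ) ∧ x ≠ y) ∨
    ((y : ℕ) = (x : ℕ) + 3))
/-!
Rooting a cycle map at the position where it passes `A → B` (unique, as the map is
injective) identifies the maps to be counted with `l` rotations of the maps `f` with
`f 0 = A`, `f 1 = B`, `C = f (-1)` adjacent to `B` and `D = f 2` adjacent to `A`. On these,
reversing the arc `D … C` is an involution: the new cycle `A B C … D A` uses the edges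
`B — C` and `D — A`, and its own `C, D` are the old `D, C`. As `C ≠ D` for `l ≥ 4`, the
involution has no fixed point.
-/

open Fin.CommRing

theorem Finset.even_card_of_involution {α : Type*} {s : Finset α} (g : α → α)
    (hg_mem : ∀ a ∈ s, g a ∈ s) (hg_invol : ∀ a ∈ s, g (g a) = a)
    (hg_ne : ∀ a ∈ s, g a ≠ a) : Even #s := by
  rw [← ZMod.natCast_eq_zero_iff_even, Finset.card_eq_sum_ones, Nat.cast_sum, Nat.cast_one]
  exact Finset.sum_involution (fun a _ => g a) (fun _ _ => by decide)
    (fun a ha _ => hg_ne a ha) hg_mem hg_invol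

theorem card_filter_exists_translate {ι V : Type*} [AddGroup ι] [Fintype ι] [DecidableEq ι]
    [Fintype V] (Q P : (ι → V) → Prop) (hQ : ∀ f t, Q f → Q (fun j => f (j + t)))
    (hP : ∀ f s t, Q f → P (fun j => f (j + s)) → P (fun j => f (j + t)) → s = t) :
    #{f | Q f ∧ ∃ t, P (fun j => f (j + t))} = Fintype.card ι * #{f | Q f ∧ P f} := by
  rw [← Finset.card_univ, ← Finset.card_product]
  symm
  apply Finset.card_bij (fun p _ => fun j => p.2 (j - p.1))
  · rintro ⟨t, f⟩ hf
    simp only [Finset.mem_product, Finset.mem_univ, Finset.mem_filter, true_and] at hf ⊢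
    refine ⟨by simpa only [sub_eq_add_neg] using hQ f (-t) hf.1, t, ?_⟩
    simpa only [add_sub_cancel_right] using hf.2
  · rintro ⟨t, f⟩ hf ⟨t', f'⟩ hf' heq
    simp only [Finset.mem_product, Finset.mem_univ, Finset.mem_filter, true_and] at hf hf'
    have htt' : t = t' := by
      refine hP (fun j => f (j - t)) t t' ?_ ?_ ?_
      · simpa only [sub_eq_add_neg] using hQ f (-t) hf.1
      · simpa only [add_sub_cancel_right] using hf.2
      · have hf'_eq : (fun j => f (j + t' - t)) = f' :=
          funext fun j => by simpa using congrFun heq (j + t')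
        rw [hf'_eq]
        exact hf'.2
    subst htt'
    have hff' : f = f' := funext fun j => by simpa using congrFun heq (j + t)
    rw [hff']
  · intro g hg
    simp only [Finset.mem_filter, Finset.mem_univ, true_and] at hg
    obtain ⟨hQg, t, hPt⟩ := hg
    exact ⟨(t, fun j => g (j + t)), by simpa using ⟨hQ g t hQg, hPt⟩,
      funext fun j => by simp⟩

section CycleMaps

variable {V : Type} {G : SimpleGraph V} {l : ℕ} [NeZero l]

theorem cyclicSucc_eq_add_one (i : Fin l) : cyclicSucc i = i + 1 :=
  Fin.ext (by simp [cyclicSucc, Fin.val_add])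

theorem cyclicPred_eq_sub_one (i : Fin l) : cyclicPred i = i - 1 := by
  rcases (Nat.one_le_iff_ne_zero.mpr (NeZero.ne l)).eq_or_lt with rfl | hl
  · exact Subsingleton.elim _ _
  · ext
    simp [cyclicPred, Fin.sub_def, Nat.mod_eq_of_lt hl, add_comm]

theorem isCycleMap_iff {f : Fin l → V} :
    IsCycleMap G l f ↔ Function.Injective f ∧ ∀ i, G.Adj (f i) (f (i + 1)) := by
  simp only [IsCycleMap, cyclicSucc_eq_add_one]

theorem IsCycleMap.comp_add_right {f : Fin l → V} (hf : IsCycleMap G l f) (t : Fin l) :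
    IsCycleMap G l (fun j => f (j + t)) := by
  rw [isCycleMap_iff] at hf ⊢
  refine ⟨hf.1.comp (add_left_injective t), fun i => ?_⟩
  simpa only [add_right_comm] using hf.2 (i + t)

end CycleMaps

section ArcReversal

variable {l : ℕ} [NeZero l]

/-- Fixes `0` and `1` and reverses the arc `2, 3, …, l - 1`. -/
def arcReversal (j : Fin l) : Fin l :=
  if j = 0 ∨ j = 1 then j else 1 - j

@[simp] theorem arcReversal_zero : arcReversal (0 : Fin l) = 0 := by simp [arcReversal]

@[simp] theorem arcReversal_one : arcReversal (1 : Fin l) = 1 := by simp [arcReversal]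

theorem arcReversal_of_ne {j : Fin l} (h0 : j ≠ 0) (h1 : j ≠ 1) : arcReversal j = 1 - j :=
  if_neg (not_or.mpr ⟨h0, h1⟩)

theorem arcReversal_involutive : Function.Involutive (arcReversal (l := l)) := by
  intro j
  by_cases hj : j = 0 ∨ j = 1
  · have hfix : arcReversal j = j := if_pos hj
    rw [hfix, hfix]
  · obtain ⟨h0, h1⟩ := not_or.mp hj
    rw [arcReversal_of_ne h0 h1, arcReversal_of_ne (sub_ne_zero.mpr (Ne.symm h1)), sub_sub_cancel]
    simpa using h0

theorem arcReversal_two (hl : 3 ≤ l) : arcReversal (2 : Fin l) = -1 := by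
  have h1 := Nat.mod_eq_of_lt (show 1 < l by omega)
  have h2 := Nat.mod_eq_of_lt (show 2 < l by omega)
  rw [arcReversal_of_ne (by simp [Fin.ext_iff, h2]) (by simp [Fin.ext_iff, h1, h2])]
  ring

theorem arcReversal_neg_one (hl : 3 ≤ l) : arcReversal (-1 : Fin l) = 2 := by
  rw [← arcReversal_two hl, arcReversal_involutive]

theorem Fin.neg_one_ne_two (hl : 4 ≤ l) : (-1 : Fin l) ≠ 2 := by
  rw [Ne, neg_eq_iff_add_eq_zero]
  norm_num [Fin.ext_iff, Fin.val_add, Nat.mod_eq_of_lt (by omega : 1 < l),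
    Nat.mod_eq_of_lt (by omega : 2 < l), Nat.mod_eq_of_lt (by omega : 3 < l)]

end ArcReversal

section CycleReversal

variable {V : Type} {G : SimpleGraph V} {l : ℕ} [NeZero l]

theorem IsCycleMap.comp_arcReversal (hl : 3 ≤ l) {f : Fin l → V} (hf : IsCycleMap G l f)
    (hC : G.Adj (f (-1)) (f 1)) (hD : G.Adj (f 2) (f 0)) :
    IsCycleMap G l (f ∘ arcReversal) := by
  rw [isCycleMap_iff] at hf ⊢
  refine ⟨hf.1.comp arcReversal_involutive.injective, fun j => ?_⟩
  simp only [Function.comp_apply]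
  by_cases h0 : j = 0
  · simpa [h0] using hf.2 0
  by_cases h1 : j = 1
  · rw [h1, arcReversal_one, one_add_one_eq_two, arcReversal_two hl]
    exact hC.symm
  by_cases hm : j = -1
  · rw [hm, neg_add_cancel, arcReversal_neg_one hl, arcReversal_zero]
    exact hD
  · have hj1 : j + 1 ≠ 0 := fun h => hm (eq_neg_of_add_eq_zero_left h)
    have hj1' : j + 1 ≠ 1 := fun h => h0 (by simpa using h)
    rw [arcReversal_of_ne h0 h1, arcReversal_of_ne hj1 hj1',
      show (1 : Fin l) - j = -j + 1 by ring, show (1 : Fin l) - (j + 1) = -j by ring]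
    exact (hf.2 (-j)).symm

end CycleReversal

section FirstClass

variable {V : Type} {G : SimpleGraph V} {A B : V} {l : ℕ} [NeZero l]

/-- The cycle `f` runs `… C A B D …` with `A = f 0`, `B = f 1`, `C = f (-1)`, `D = f 2`, and
`C — B`, `D — A` are edges. -/
def IsFirstClassRooted (G : SimpleGraph V) (A B : V) (f : Fin l → V) : Prop :=
  f 0 = A ∧ f 1 = B ∧ G.Adj (f (-1)) B ∧ G.Adj (f 2) A

theorem isFirstClassRooted_translate_iff (f : Fin l → V) (t : Fin l) :
    IsFirstClassRooted G A B (fun j => f (j + t)) ↔ f t = A ∧ f (cyclicSucc t) = B ∧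
      G.Adj (f (cyclicPred t)) B ∧ G.Adj (f (cyclicSucc (cyclicSucc t))) A := by
  simp only [IsFirstClassRooted, cyclicSucc_eq_add_one, cyclicPred_eq_sub_one]
  rw [zero_add, add_comm 1 t, neg_add_eq_sub, show (2 : Fin l) + t = t + 1 + 1 by ring]

theorem IsCycleMap.eq_of_isFirstClassRooted_translate {f : Fin l → V} (hf : IsCycleMap G l f)
    {s t : Fin l} (hs : IsFirstClassRooted G A B (fun j => f (j + s)))
    (ht : IsFirstClassRooted G A B (fun j => f (j + t))) : s = t :=
  hf.1 (by simpa using hs.1.trans ht.1.symm)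

theorem IsFirstClassRooted.comp_arcReversal (hl : 3 ≤ l) {f : Fin l → V}
    (hf : IsCycleMap G l f) (hr : IsFirstClassRooted G A B f) :
    IsCycleMap G l (f ∘ arcReversal) ∧ IsFirstClassRooted G A B (f ∘ arcReversal) := by
  obtain ⟨hA, hB, hC, hD⟩ := hr
  have hedge := (isCycleMap_iff.mp hf).2
  refine ⟨hf.comp_arcReversal hl (hB ▸ hC) (hA ▸ hD), by simpa using hA, by simpa using hB,
    ?_, ?_⟩
  · simpa [arcReversal_neg_one hl, hB, one_add_one_eq_two] using (hedge 1).symm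
  · simpa [arcReversal_two hl, hA] using hedge (-1)

theorem even_card_isCycleMap_isFirstClassRooted [Fintype V] (hl : 4 ≤ l) :
    Even #(univ.filter fun f : Fin l → V => IsCycleMap G l f ∧ IsFirstClassRooted G A B f) := by
  refine Finset.even_card_of_involution (· ∘ arcReversal) (fun f hf => ?_) (fun f _ => ?_)
    (fun f hf hfix => ?_)
  · simp only [Finset.mem_filter, Finset.mem_univ, true_and] at hf ⊢
    exact hf.2.comp_arcReversal (by omega) hf.1
  · simp [Function.comp_assoc, arcReversal_involutive.comp_self]
  · have h2 := congrFun hfix 2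
    rw [Function.comp_apply, arcReversal_two (by omega)] at h2
    exact Fin.neg_one_ne_two hl ((Finset.mem_filter.mp hf).2.1.1 h2)

end FirstClass

theorem even_cycles_through_edge_first_class_general {V : Type} [Fintype V]
    (G : SimpleGraph V) (A B : V) (l : ℕ) (hl : 4 ≤ l) :
    2 * l ∣ (Finset.univ.filter (fun f : Fin l → V =>
      IsCycleMap G l f ∧ ∃ i : Fin l, f i = A ∧ f (cyclicSucc i) = B ∧
        G.Adj (f (cyclicPred i)) B ∧ G.Adj (f (cyclicSucc (cyclicSucc i))) A)).card := by
  have : NeZero l := ⟨by omega⟩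
  calc 2 * l = l * 2 := mul_comm 2 l
    _ ∣ Fintype.card (Fin l) * #(univ.filter fun f : Fin l → V =>
          IsCycleMap G l f ∧ IsFirstClassRooted G A B f) := by
      rw [Fintype.card_fin]
      exact mul_dvd_mul_left l (even_iff_two_dvd.mp (even_card_isCycleMap_isFirstClassRooted hl))
    _ = _ := (card_filter_exists_translate _ _ (fun f t hf => hf.comp_add_right t)
          fun f s t hf => hf.eq_of_isFirstClassRooted_translate).symm
    _ = _ := by
      congr 1
      ext f
      simp only [Finset.mem_filter, isFirstClassRooted_translate_iff]

theorem even_cycles_through_edge_first_class {V : Type} [Fintype V]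
    (G : SimpleGraph V) (A B : V) (hAB : G.Adj A B) (l : ℕ) (hl : 4 ≤ l) :
    2 * l ∣ (Finset.univ.filter (fun f : Fin l → V =>
      IsCycleMap G l f ∧ ∃ i : Fin l, f i = A ∧ f (cyclicSucc i) = B ∧
        G.Adj (f (cyclicPred i)) B ∧ G.Adj (f (cyclicSucc (cyclicSucc i))) A)).card :=
  even_cycles_through_edge_first_class_general G A B l hl
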